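/- Under assumptions (A4)–(A6), there exists a constant C > 0 (depending only on the kernel bound, c_f and C_f) such that sup_{x₁∈[0,1]} sup_{1≤J≤N} |μ_{ω_J}(x₁)| ≤ C·H^{1/2} for all n, where μ_{ω_J}(x₁) = E[K_h(X_{l1} − x₁)B_{J,2}(X_{l2})]. -/

import Mathlib

open MeasureTheory Filter Finset

noncomputable section

/-- Constant (first-order) B-spline: indicator of `[JH, (J+1)H)`. -/
def indicSpl (H : ℝ) (J : ℕ) (x : ℝ) : ℝ :=
  if (J : ℝ) * H ≤ x ∧ x < ((J : ℝ) + 1) * H then 1 else 0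

/-- `c_{J,α} = E[I_{J,α}(X_α)]`. -/
def cSpl {Ω : Type*} [MeasurableSpace Ω] (μ : Measure Ω) (Xα : Ω → ℝ) (H : ℝ) (J : ℕ) : ℝ :=
  ∫ ω, indicSpl H J (Xα ω) ∂μ

/-- Centered B-spline basis `b_{J,α} = I_{J+1,α} − (c_{J+1,α}/c_{J,α}) I_{J,α}`. -/
def bSpl {Ω : Type*} [MeasurableSpace Ω] (μ : Measure Ω) (Xα : Ω → ℝ) (H : ℝ) (J : ℕ)
    (x : ℝ) : ℝ :=
  indicSpl H (J + 1) x - (cSpl μ Xα H (J + 1) / cSpl μ Xα H J) * indicSpl H J x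

/-- Standardized B-spline basis `B_{J,α} = b_{J,α}/‖b_{J,α}‖₂`. -/
def BSpl {Ω : Type*} [MeasurableSpace Ω] (μ : Measure Ω) (Xα : Ω → ℝ) (H : ℝ) (J : ℕ)
    (x : ℝ) : ℝ :=
  bSpl μ Xα H J x / Real.sqrt (∫ ω, (bSpl μ Xα H J (Xα ω)) ^ 2 ∂μ)

/-- Rescaled kernel `K_h(u) = K(u/h)/h`. -/
def kerh (K : ℝ → ℝ) (h u : ℝ) : ℝ := K (u / h) / h

section Aux

open scoped NNReal ENNReal

lemma indicSpl_eq_indicator (H : ℝ) (J : ℕ) :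
    indicSpl H J = (Set.Ico ((J:ℝ)*H) (((J:ℝ)+1)*H)).indicator (fun _ => (1:ℝ)) := by
  funext x; simp [indicSpl, Set.indicator_apply, Set.mem_Ico]

lemma measurable_indicSpl (H : ℝ) (J : ℕ) : Measurable (indicSpl H J) := by
  rw [indicSpl_eq_indicator]
  exact measurable_const.indicator measurableSet_Ico

lemma indicSpl_nonneg (H : ℝ) (J : ℕ) (x : ℝ) : 0 ≤ indicSpl H J x := by
  unfold indicSpl; split <;> norm_num

lemma indicSpl_le_one (H : ℝ) (J : ℕ) (x : ℝ) : indicSpl H J x ≤ 1 := by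
  unfold indicSpl; split <;> norm_num

lemma abs_indicSpl_le_one (H : ℝ) (J : ℕ) (x : ℝ) : |indicSpl H J x| ≤ 1 := by
  rw [abs_of_nonneg (indicSpl_nonneg H J x)]; exact indicSpl_le_one H J x

lemma indicSpl_eq_zero (H : ℝ) (J : ℕ) (x : ℝ)
    (hx : x < (J:ℝ)*H ∨ ((J:ℝ)+1)*H ≤ x) : indicSpl H J x = 0 := by
  rw [indicSpl]
  refine if_neg ?_
  rintro ⟨ha, hb⟩
  rcases hx with hc | hc <;> linarith

lemma integrable_of_ae_bounded {Ω : Type*} [MeasurableSpace Ω] {μ : Measure Ω}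
    [IsFiniteMeasure μ] {g : Ω → ℝ} (hg : AEStronglyMeasurable g μ) {c : ℝ}
    (hb : ∀ᵐ ω ∂μ, |g ω| ≤ c) : Integrable g μ :=
  (integrable_const c).mono' hg (by simpa [Real.norm_eq_abs] using hb)

lemma dens_int {Ω α : Type*} [MeasurableSpace Ω] [MeasurableSpace α]
    (μ : Measure Ω) (ν : Measure α) (Y : Ω → α) (hY : Measurable Y)
    (fd : α → ℝ) (hfd : AEMeasurable fd ν)
    (hdens : Measure.map Y μ = ν.withDensity fun x => ENNReal.ofReal (fd x))
    (g : α → ℝ) (hg : Measurable g) :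
    ∫ ω, g (Y ω) ∂μ = ∫ x, max (fd x) 0 * g x ∂ν := by
  rw [← integral_map hY.aemeasurable hg.aestronglyMeasurable, hdens]
  have h1 : (fun x => ENNReal.ofReal (fd x))
      = fun x => ((Real.toNNReal (fd x) : ℝ≥0) : ℝ≥0∞) := rfl
  rw [h1, integral_withDensity_eq_integral_smul₀
    (f := fun x => Real.toNNReal (fd x))
    (measurable_real_toNNReal.comp_aemeasurable hfd) g]
  refine integral_congr_ae (ae_of_all _ fun x => ?_)
  simp [NNReal.smul_def, Real.coe_toNNReal']

instance : IsFiniteMeasure (volume.restrict (Set.Icc (0:ℝ) 1)) :=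
  ⟨by rw [Measure.restrict_apply_univ]; simp [Real.volume_Icc]⟩

lemma indicSpl_setIntegral (H : ℝ) (J : ℕ) :
    ∫ x in Set.Icc (0:ℝ) 1, indicSpl H J x
      = (volume (Set.Ico ((J:ℝ)*H) (((J:ℝ)+1)*H) ∩ Set.Icc 0 1)).toReal := by
  rw [indicSpl_eq_indicator, integral_indicator_const (1:ℝ) measurableSet_Ico, measureReal_def,
    Measure.restrict_apply measurableSet_Ico, smul_eq_mul, mul_one]

lemma cSpl_le {Ω : Type*} [MeasurableSpace Ω] (μ : Measure Ω) [IsProbabilityMeasure μ]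
    (Y : Ω → ℝ) (hY : Measurable Y) (fd : ℝ → ℝ) (cf Cf : ℝ) (hcf : 0 < cf) (hCf : cf ≤ Cf)
    (hfdcont : ContinuousOn fd (Set.Icc 0 1))
    (hfdbdd : ∀ x ∈ Set.Icc (0:ℝ) 1, cf ≤ fd x ∧ fd x ≤ Cf)
    (hdens : Measure.map Y μ
      = (volume.restrict (Set.Icc (0:ℝ) 1)).withDensity fun x => ENNReal.ofReal (fd x))
    (H : ℝ) (hH : 0 < H) (J : ℕ) :
    cSpl μ Y H J ≤ Cf * H := by
  have hCf0 : (0:ℝ) ≤ Cf := hcf.le.trans hCf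
  have heq : cSpl μ Y H J = ∫ x in Set.Icc (0:ℝ) 1, max (fd x) 0 * indicSpl H J x :=
    dens_int μ _ Y hY fd (hfdcont.aemeasurable measurableSet_Icc) hdens _
      (measurable_indicSpl H J)
  rw [heq]
  calc ∫ x in Set.Icc (0:ℝ) 1, max (fd x) 0 * indicSpl H J x
      ≤ ∫ x in Set.Icc (0:ℝ) 1, Cf * indicSpl H J x := by
        apply integral_mono_of_nonneg
        · exact ae_of_all _ fun x => mul_nonneg (le_max_right _ _) (indicSpl_nonneg _ _ _)
        · refine integrable_of_ae_bounded (c := Cf)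
            ((measurable_const.mul (measurable_indicSpl H J)).aestronglyMeasurable)
            (ae_of_all _ fun x => ?_)
          calc |Cf * indicSpl H J x| = Cf * |indicSpl H J x| := by
                rw [abs_mul, abs_of_nonneg hCf0]
            _ ≤ Cf * 1 := mul_le_mul_of_nonneg_left (abs_indicSpl_le_one _ _ _) hCf0
            _ = Cf := mul_one Cf
        · filter_upwards [ae_restrict_mem measurableSet_Icc] with x hx
          exact mul_le_mul_of_nonneg_right
            (max_le (hfdbdd x hx).2 hCf0) (indicSpl_nonneg _ _ _)
    _ = Cf * ∫ x in Set.Icc (0:ℝ) 1, indicSpl H J x := integral_const_mul Cf _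
    _ ≤ Cf * H := by
        rw [indicSpl_setIntegral]
        refine mul_le_mul_of_nonneg_left ?_ hCf0
        refine ENNReal.toReal_le_of_le_ofReal hH.le ?_
        refine le_trans (measure_mono Set.inter_subset_left) ?_
        rw [Real.volume_Ico]
        exact le_of_eq (by ring_nf)

lemma cSpl_ge {Ω : Type*} [MeasurableSpace Ω] (μ : Measure Ω) [IsProbabilityMeasure μ]
    (Y : Ω → ℝ) (hY : Measurable Y) (fd : ℝ → ℝ) (cf Cf : ℝ) (hcf : 0 < cf) (hCf : cf ≤ Cf)
    (hfdcont : ContinuousOn fd (Set.Icc 0 1))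
    (hfdbdd : ∀ x ∈ Set.Icc (0:ℝ) 1, cf ≤ fd x ∧ fd x ≤ Cf)
    (hdens : Measure.map Y μ
      = (volume.restrict (Set.Icc (0:ℝ) 1)).withDensity fun x => ENNReal.ofReal (fd x))
    (H : ℝ) (hH : 0 < H) (J : ℕ) (hle : ((J:ℝ)+1) * H ≤ 1) :
    cf * H ≤ cSpl μ Y H J := by
  have hCf0 : (0:ℝ) ≤ Cf := hcf.le.trans hCf
  have heq : cSpl μ Y H J = ∫ x in Set.Icc (0:ℝ) 1, max (fd x) 0 * indicSpl H J x :=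
    dens_int μ _ Y hY fd (hfdcont.aemeasurable measurableSet_Icc) hdens _
      (measurable_indicSpl H J)
  have hsub : Set.Ico ((J:ℝ)*H) (((J:ℝ)+1)*H) ⊆ Set.Icc (0:ℝ) 1 := fun x hx =>
    ⟨le_trans (by positivity) hx.1, le_trans hx.2.le hle⟩
  have hkey : cf * H = ∫ x in Set.Icc (0:ℝ) 1, cf * indicSpl H J x := by
    rw [integral_const_mul, indicSpl_setIntegral, Set.inter_eq_self_of_subset_left hsub,
      Real.volume_Ico, ENNReal.toReal_ofReal (by nlinarith : (0:ℝ) ≤ ((J:ℝ)+1)*H - (J:ℝ)*H)]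
    ring
  rw [heq, hkey]
  apply integral_mono_of_nonneg
  · exact ae_of_all _ fun x => mul_nonneg hcf.le (indicSpl_nonneg _ _ _)
  · refine integrable_of_ae_bounded (c := Cf)
      ((((hfdcont.aemeasurable measurableSet_Icc).max aemeasurable_const).mul
        (measurable_indicSpl H J).aemeasurable).aestronglyMeasurable) ?_
    filter_upwards [ae_restrict_mem measurableSet_Icc] with x hx
    rw [abs_mul]
    calc |max (fd x) 0| * |indicSpl H J x| ≤ Cf * 1 := by
          refine mul_le_mul ?_ (abs_indicSpl_le_one _ _ _) (abs_nonneg _) hCf0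
          rw [abs_of_nonneg (le_max_right _ _)]
          exact max_le (hfdbdd x hx).2 hCf0
      _ = Cf := mul_one Cf
  · filter_upwards [ae_restrict_mem measurableSet_Icc] with x hx
    exact mul_le_mul_of_nonneg_right
      (le_trans (hfdbdd x hx).1 (le_max_left _ _)) (indicSpl_nonneg _ _ _)

end Aux

set_option maxHeartbeats 1000000 in
/-- Lemma A.3 of Wang–Yang:
`sup_{x₁∈[0,1]} sup_{1≤J≤N} |μ_{ω_J}(x₁)| ≤ C·H^{1/2}` where
`μ_{ω_J}(x₁) = E[K_h(X_{l1} − x₁) B_{J,2}(X_{l2})]`. -/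
theorem stmt_11
    {Ω : Type} [MeasurableSpace Ω] (μ : Measure Ω) [IsProbabilityMeasure μ]
    (X : Ω → Fin 2 → ℝ) (hXmeas : Measurable X)
    (hXrange : ∀ᵐ ω ∂μ, ∀ α, X ω α ∈ Set.Icc (0 : ℝ) 1)
    -- (A4)
    (f : (Fin 2 → ℝ) → ℝ) (f₁ : Fin 2 → ℝ → ℝ) (cf Cf : ℝ) (hcf : 0 < cf) (hCf : cf ≤ Cf)
    (hfcont : ContinuousOn f (Set.Icc 0 1))
    (hfbdd : ∀ x ∈ Set.Icc (0 : Fin 2 → ℝ) 1, cf ≤ f x ∧ f x ≤ Cf)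
    (hfdens : Measure.map X μ =
      (volume.restrict (Set.Icc (0 : Fin 2 → ℝ) 1)).withDensity fun x => ENNReal.ofReal (f x))
    (hf₁diff : ∀ α, ContDiffOn ℝ 1 (f₁ α) (Set.Icc 0 1))
    (hf₁bdd : ∀ α, ∀ x ∈ Set.Icc (0 : ℝ) 1, cf ≤ f₁ α x ∧ f₁ α x ≤ Cf)
    (hf₁dens : ∀ α, Measure.map (fun ω => X ω α) μ =
      (volume.restrict (Set.Icc (0 : ℝ) 1)).withDensity fun x => ENNReal.ofReal (f₁ α x))
    -- (A5): Lipschitz, bounded, nonnegative, symmetric, compactly supported kernel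
    (K : ℝ → ℝ) (CK : ℝ) (hCK : 0 < CK) (hKlip : LipschitzWith (Real.toNNReal CK) K)
    (hKbdd : ∃ B, ∀ u, K u ≤ B) (hKpos : ∀ u, 0 ≤ K u) (hKsymm : ∀ u, K (-u) = K u)
    (hKsupp : ∀ u, u ∉ Set.Icc (-1 : ℝ) 1 → K u = 0)
    -- bandwidth
    (h : ℕ → ℝ) (ch Ch : ℝ) (hch : 0 < ch)
    (hband : ∀ n : ℕ, 2 ≤ n →
      ch * (n : ℝ) ^ (-(1 / 5 : ℝ)) ≤ h n ∧ h n ≤ Ch * (n : ℝ) ^ (-(1 / 5 : ℝ)))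
    -- (A6): number of interior knots
    (N : ℕ → ℕ) (cN CN : ℝ) (hcN : 0 < cN)
    (hknots : ∀ n : ℕ, 2 ≤ n →
      cN * (n : ℝ) ^ ((2 : ℝ) / 5) * Real.log n ≤ (N n : ℝ) ∧
      (N n : ℝ) ≤ CN * (n : ℝ) ^ ((2 : ℝ) / 5) * Real.log n) :
    ∃ C : ℝ, 0 < C ∧ ∀ n : ℕ, 2 ≤ n → ∀ x₁ ∈ Set.Icc (0 : ℝ) 1, ∀ J : ℕ,
      1 ≤ J → J ≤ N n →
      |∫ ω, kerh K (h n) (X ω 0 - x₁) *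
          BSpl μ (fun ω' => X ω' 1) ((N n : ℝ) + 1)⁻¹ J (X ω 1) ∂μ| ≤
        C * Real.sqrt ((N n : ℝ) + 1)⁻¹ := by
  classical
  obtain ⟨B, hB⟩ := hKbdd
  set BK : ℝ := max B 1 with hBKdef
  have hBK1 : (1:ℝ) ≤ BK := le_max_right _ _
  have hBKpos : (0:ℝ) < BK := lt_of_lt_of_le one_pos hBK1
  have hKleBK : ∀ u, K u ≤ BK := fun u => (hB u).trans (le_max_left _ _)
  have hCfpos : 0 < Cf := lt_of_lt_of_le hcf hCf
  set Cb : ℝ := 1 + Cf / cf with hCbdef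
  have hCbpos : 0 < Cb := by positivity
  refine ⟨4 * Cf * BK * Cb / Real.sqrt cf, by positivity, ?_⟩
  intro n hn x₁ hx₁ J hJ1 hJN
  set C₀ : ℝ := 4 * Cf * BK * Cb / Real.sqrt cf with hC₀def
  have hC₀pos : 0 < C₀ := by positivity
  set H : ℝ := ((N n : ℝ) + 1)⁻¹ with hHdef
  have hHpos : 0 < H := by rw [hHdef]; positivity
  clear_value H
  have hX2m : Measurable (fun ω => X ω 1) := (measurable_pi_apply 1).comp hXmeas
  have hf1cont : ContinuousOn (f₁ 1) (Set.Icc 0 1) := (hf₁diff 1).continuousOn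
  -- bounds on cSpl
  have hcub : ∀ Jc : ℕ, cSpl μ (fun ω => X ω 1) H Jc ≤ Cf * H := fun Jc =>
    cSpl_le μ _ hX2m (f₁ 1) cf Cf hcf hCf hf1cont (hf₁bdd 1) (hf₁dens 1) H hHpos Jc
  have hclb : ∀ Jc : ℕ, ((Jc:ℝ)+1) * H ≤ 1 → cf * H ≤ cSpl μ (fun ω => X ω 1) H Jc :=
    fun Jc hle =>
    cSpl_ge μ _ hX2m (f₁ 1) cf Cf hcf hCf hf1cont (hf₁bdd 1) (hf₁dens 1) H hHpos Jc hle
  have hhpos : 0 < h n := lt_of_lt_of_le (by positivity) (hband n hn).1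
  by_cases hJeq : J = N n
  · -- boundary case: the normalizing constant vanishes and BSpl ≡ 0
    have hae0 : ∀ᵐ ω ∂μ, indicSpl H (J+1) (X ω 1) = 0 := by
      have hmap : μ {ω | X ω 1 = 1} = 0 := by
        have h1 : {ω | X ω 1 = 1} = (fun ω => X ω 1) ⁻¹' {1} := rfl
        rw [h1, ← Measure.map_apply hX2m (measurableSet_singleton 1), hf₁dens 1,
          withDensity_apply _ (measurableSet_singleton 1)]
        refine setLIntegral_measure_zero _ _ ?_
        rw [Measure.restrict_apply (measurableSet_singleton 1)]
        exact measure_mono_null Set.inter_subset_left (Real.volume_singleton)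
      have hne : ∀ᵐ ω ∂μ, X ω 1 ≠ 1 := by
        rw [ae_iff]
        simpa using hmap
      filter_upwards [hXrange, hne] with ω hr hne1
      have hle1 : X ω 1 ≤ 1 := (hr 1).2
      have hlt1 : X ω 1 < 1 := lt_of_le_of_ne hle1 hne1
      refine if_neg ?_
      rintro ⟨hlb, -⟩
      have hcast : ((J+1 : ℕ):ℝ) * H = 1 := by
        rw [hJeq]; push_cast
        rw [hHdef]
        exact mul_inv_cancel₀ (by positivity)
      rw [hcast] at hlb
      linarith
    have hcz : cSpl μ (fun ω => X ω 1) H (J+1) = 0 := by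
      have : (fun ω => indicSpl H (J+1) (X ω 1)) =ᵐ[μ] fun _ => (0:ℝ) := hae0
      show ∫ ω, indicSpl H (J+1) (X ω 1) ∂μ = 0
      rw [integral_congr_ae this, integral_zero]
    have hb2 : (∫ ω, (bSpl μ (fun ω' => X ω' 1) H J ((fun ω' => X ω' 1) ω)) ^ 2 ∂μ) = 0 := by
      have hae : (fun ω => (bSpl μ (fun ω' => X ω' 1) H J (X ω 1)) ^ 2) =ᵐ[μ]
          fun _ => (0:ℝ) := by
        filter_upwards [hae0] with ω h0
        simp [bSpl, hcz, h0]
      rw [integral_congr_ae hae, integral_zero]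
    have hBz : ∀ x, BSpl μ (fun ω' => X ω' 1) H J x = 0 := fun x => by
      rw [BSpl, hb2]
      simp
    simp only [hBz, mul_zero, integral_zero, abs_zero]
    positivity
  · -- main case
    have hJlt : J < N n := lt_of_le_of_ne hJN hJeq
    have hNpos : (0:ℝ) < (N n : ℝ) + 1 := by positivity
    have hJ1H : ((J:ℝ)+1) * H ≤ 1 := by
      rw [hHdef]
      have h1 : (J:ℝ) + 1 ≤ (N n : ℝ) + 1 := by
        have : (J:ℝ) ≤ (N n : ℝ) := by exact_mod_cast hJN
        linarith
      calc ((J:ℝ)+1) * ((N n : ℝ) + 1)⁻¹ ≤ ((N n : ℝ)+1) * ((N n : ℝ) + 1)⁻¹ := by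
            exact mul_le_mul_of_nonneg_right h1 (by positivity)
        _ = 1 := mul_inv_cancel₀ (ne_of_gt hNpos)
    have hJ2H : (((J+1:ℕ):ℝ)+1) * H ≤ 1 := by
      rw [hHdef]
      have h1 : ((J+1:ℕ):ℝ) + 1 ≤ (N n : ℝ) + 1 := by
        push_cast
        have : (J:ℝ) + 1 ≤ (N n : ℝ) := by exact_mod_cast hJlt
        linarith
      calc (((J+1:ℕ):ℝ)+1) * ((N n : ℝ) + 1)⁻¹ ≤ ((N n : ℝ)+1) * ((N n : ℝ) + 1)⁻¹ := by
            exact mul_le_mul_of_nonneg_right h1 (by positivity)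
        _ = 1 := mul_inv_cancel₀ (ne_of_gt hNpos)
    have hcJ : cf * H ≤ cSpl μ (fun ω => X ω 1) H J := hclb J hJ1H
    have hcJ1 : cf * H ≤ cSpl μ (fun ω => X ω 1) H (J+1) := hclb (J+1) hJ2H
    have hcJ1u : cSpl μ (fun ω => X ω 1) H (J+1) ≤ Cf * H := hcub (J+1)
    have hcJpos : 0 < cSpl μ (fun ω => X ω 1) H J := lt_of_lt_of_le (by positivity) hcJ
    have hr0 : 0 ≤ cSpl μ (fun ω => X ω 1) H (J+1) / cSpl μ (fun ω => X ω 1) H J :=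
      div_nonneg (le_trans (by positivity) hcJ1) hcJpos.le
    have hrub : cSpl μ (fun ω => X ω 1) H (J+1) / cSpl μ (fun ω => X ω 1) H J ≤ Cf / cf := by
      calc cSpl μ (fun ω => X ω 1) H (J+1) / cSpl μ (fun ω => X ω 1) H J
          ≤ (Cf * H) / (cf * H) := div_le_div₀ (by positivity) hcJ1u (by positivity) hcJ
        _ = Cf / cf := by
            rw [mul_comm Cf H, mul_comm cf H, mul_div_mul_left _ _ (ne_of_gt hHpos)]
    have hbabs : ∀ x, |bSpl μ (fun ω' => X ω' 1) H J x| ≤ Cb := by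
      intro x
      have hd0 : (0:ℝ) ≤ Cf / cf := by positivity
      rw [hCbdef, bSpl]
      have h1 := indicSpl_nonneg H (J+1) x
      have h2 := indicSpl_le_one H (J+1) x
      have h3 := indicSpl_nonneg H J x
      have h4 := indicSpl_le_one H J x
      rw [abs_le]
      constructor <;> nlinarith [hr0, hrub]
    -- lower bound for the normalizing constant
    have hpt : ∀ x, indicSpl H (J+1) x ≤ (bSpl μ (fun ω' => X ω' 1) H J x) ^ 2 := by
      intro x
      by_cases hx : ((J+1:ℕ) : ℝ) * H ≤ x ∧ x < (((J+1:ℕ):ℝ) + 1) * H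
      · have h1 : indicSpl H (J+1) x = 1 := if_pos hx
        have h2 : indicSpl H J x = 0 := by
          refine if_neg ?_
          rintro ⟨-, hlt⟩
          have := hx.1
          push_cast at this
          linarith
        rw [bSpl, h1, h2]
        norm_num
      · have h1 : indicSpl H (J+1) x = 0 := if_neg hx
        rw [h1]
        positivity
    have hbm : Measurable (bSpl μ (fun ω' => X ω' 1) H J) :=
      (measurable_indicSpl _ _).sub (measurable_const.mul (measurable_indicSpl _ _))
    have hnorm_lb : cf * H ≤ ∫ ω, (bSpl μ (fun ω' => X ω' 1) H J ((fun ω' => X ω' 1) ω)) ^ 2 ∂μ := by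
      have hint1 : Integrable (fun ω => indicSpl H (J+1) (X ω 1)) μ :=
        integrable_of_ae_bounded (c := 1) ((measurable_indicSpl _ _).comp hX2m).aestronglyMeasurable
          (ae_of_all _ fun ω => abs_indicSpl_le_one _ _ _)
      have hint2 : Integrable (fun ω => (bSpl μ (fun ω' => X ω' 1) H J (X ω 1)) ^ 2) μ := by
        refine integrable_of_ae_bounded (c := Cb * Cb) (((hbm.pow_const 2).comp hX2m).aestronglyMeasurable)
          (ae_of_all _ fun ω => ?_)
        have h1 := hbabs (X ω 1)
        rw [abs_of_nonneg (sq_nonneg _), sq]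
        calc bSpl μ (fun ω' => X ω' 1) H J (X ω 1) * bSpl μ (fun ω' => X ω' 1) H J (X ω 1)
            ≤ |bSpl μ (fun ω' => X ω' 1) H J (X ω 1)| * |bSpl μ (fun ω' => X ω' 1) H J (X ω 1)| := by
              rw [← abs_mul]; exact le_abs_self _
          _ ≤ Cb * Cb := mul_le_mul h1 h1 (abs_nonneg _) hCbpos.le
      calc cf * H ≤ cSpl μ (fun ω => X ω 1) H (J+1) := hcJ1
        _ ≤ _ := integral_mono hint1 hint2 fun ω => hpt (X ω 1)
      -- note Cb*Cb bound only needed for integrability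
    have hsqpos : 0 < Real.sqrt (cf * H) := Real.sqrt_pos.2 (by positivity)
    have hs_lb : Real.sqrt (cf * H)
        ≤ Real.sqrt (∫ ω, (bSpl μ (fun ω' => X ω' 1) H J ((fun ω' => X ω' 1) ω)) ^ 2 ∂μ) :=
      Real.sqrt_le_sqrt hnorm_lb
    set M : ℝ := Cb / Real.sqrt (cf * H) with hMdef
    have hMpos : 0 < M := by positivity
    set Bset : Set ℝ := Set.Ico ((J:ℝ)*H) (((J:ℝ)+2)*H) with hBsetdef
    have hBb : ∀ x, |BSpl μ (fun ω' => X ω' 1) H J x|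
        ≤ M * Set.indicator Bset (fun _ => (1:ℝ)) x := by
      intro x
      by_cases hx : x ∈ Bset
      · rw [Set.indicator_of_mem hx, mul_one, BSpl, abs_div,
          abs_of_nonneg (Real.sqrt_nonneg _), hMdef]
        exact div_le_div₀ hCbpos.le (hbabs x) hsqpos hs_lb
      · rw [Set.indicator_of_notMem hx, mul_zero]
        have hxI : x < (J:ℝ)*H ∨ ((J:ℝ)+2)*H ≤ x := by
          rw [hBsetdef, Set.mem_Ico, not_and_or, not_le, not_lt] at hx
          exact hx
        have h1 : indicSpl H (J+1) x = 0 := by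
          refine indicSpl_eq_zero H (J+1) x ?_
          push_cast
          rcases hxI with hc | hc
          · left; nlinarith [hHpos.le]
          · right; linarith
        have h2 : indicSpl H J x = 0 := by
          refine indicSpl_eq_zero H J x ?_
          rcases hxI with hc | hc
          · left; exact hc
          · right; nlinarith [hHpos.le]
        have hb0 : bSpl μ (fun ω' => X ω' 1) H J x = 0 := by
          rw [bSpl, h1, h2]; ring
        rw [BSpl, hb0, zero_div, abs_zero]
    -- kernel bound
    have hker_nonneg : ∀ u, 0 ≤ kerh K (h n) u := fun u => div_nonneg (hKpos _) hhpos.le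
    set A : Set ℝ := Set.Icc (x₁ - h n) (x₁ + h n) with hAdef
    have hkerb : ∀ u : ℝ, kerh K (h n) (u - x₁) ≤ (BK / h n) * Set.indicator A (fun _ => (1:ℝ)) u := by
      intro u
      by_cases hu : u ∈ A
      · rw [Set.indicator_of_mem hu, mul_one, kerh]
        exact div_le_div_of_nonneg_right (hKleBK _) hhpos.le
      · rw [Set.indicator_of_notMem hu, mul_zero, kerh]
        have hK0 : K ((u - x₁) / h n) = 0 := by
          refine hKsupp _ ?_
          rw [hAdef, Set.mem_Icc, not_and_or, not_le, not_le] at hu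
          rw [Set.mem_Icc, not_and_or, not_le, not_le]
          rcases hu with hc | hc
          · left; rw [div_lt_iff₀ hhpos]; linarith
          · right; rw [lt_div_iff₀ hhpos]; linarith
        rw [hK0, zero_div]
    set S : Set (Fin 2 → ℝ) := ((fun x : Fin 2 → ℝ => x 0) ⁻¹' A) ∩ ((fun x : Fin 2 → ℝ => x 1) ⁻¹' Bset) with hSdef
    have hSmeas : MeasurableSet S :=
      ((measurable_pi_apply 0) measurableSet_Icc).inter ((measurable_pi_apply 1) measurableSet_Ico)
    have hSvol : volume S ≤ ENNReal.ofReal (4 * h n * H) := by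
      have hSpi : S = Set.pi Set.univ ![A, Bset] := by
        ext x
        simp [hSdef, Set.mem_pi, Fin.forall_fin_two]
      rw [hSpi, volume_pi_pi, Fin.prod_univ_two]
      simp only [Matrix.cons_val_zero, Matrix.cons_val_one, Matrix.head_cons]
      rw [hAdef, hBsetdef, Real.volume_Icc, Real.volume_Ico,
        ← ENNReal.ofReal_mul (by linarith : (0:ℝ) ≤ x₁ + h n - (x₁ - h n))]
      exact ENNReal.ofReal_le_ofReal (le_of_eq (by ring))
    -- measure change on the joint density
    haveI : IsFiniteMeasure (volume.restrict (Set.Icc (0 : Fin 2 → ℝ) 1)) := by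
      refine ⟨?_⟩
      rw [Measure.restrict_apply_univ, Real.volume_Icc_pi]
      simp
    have hkerm : Measurable (kerh K (h n)) := by
      unfold kerh
      exact (hKlip.continuous.measurable.comp (measurable_id.div_const _)).div_const _
    have hQm : Measurable fun x : Fin 2 → ℝ =>
        |kerh K (h n) (x 0 - x₁) * BSpl μ (fun ω' => X ω' 1) H J (x 1)| := by
      have hBm : Measurable (BSpl μ (fun ω' => X ω' 1) H J) := hbm.div_const _
      exact ((hkerm.comp ((measurable_pi_apply 0).sub measurable_const)).mul
        (hBm.comp (measurable_pi_apply 1))).abs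
    have hfaem : AEMeasurable f (volume.restrict (Set.Icc (0 : Fin 2 → ℝ) 1)) :=
      hfcont.aemeasurable measurableSet_Icc
    have step2 : ∫ ω, |kerh K (h n) (X ω 0 - x₁) * BSpl μ (fun ω' => X ω' 1) H J (X ω 1)| ∂μ
        = ∫ x in Set.Icc (0 : Fin 2 → ℝ) 1,
            max (f x) 0 * |kerh K (h n) (x 0 - x₁) * BSpl μ (fun ω' => X ω' 1) H J (x 1)| :=
      dens_int μ _ X hXmeas f hfaem hfdens _ hQm
    set D : ℝ := Cf * ((BK / h n) * M) with hDdef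
    have hDpos : 0 < D := by positivity
    have step3 : ∫ x in Set.Icc (0 : Fin 2 → ℝ) 1,
          max (f x) 0 * |kerh K (h n) (x 0 - x₁) * BSpl μ (fun ω' => X ω' 1) H J (x 1)|
        ≤ ∫ x in Set.Icc (0 : Fin 2 → ℝ) 1, D * Set.indicator S (fun _ => (1:ℝ)) x := by
      apply integral_mono_of_nonneg
      · exact ae_of_all _ fun x => mul_nonneg (le_max_right _ _) (abs_nonneg _)
      · refine integrable_of_ae_bounded (c := |D|)
          ((measurable_const.mul (measurable_const.indicator hSmeas)).aestronglyMeasurable)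
          (ae_of_all _ fun x => ?_)
        rw [abs_mul]
        calc |D| * |Set.indicator S (fun _ => (1:ℝ)) x| ≤ |D| * 1 := by
              refine mul_le_mul_of_nonneg_left ?_ (abs_nonneg _)
              rw [Set.indicator_apply]
              split <;> simp
          _ = |D| := mul_one _
      · filter_upwards [ae_restrict_mem measurableSet_Icc] with x hx
        have hfx : max (f x) 0 ≤ Cf := max_le (hfbdd x hx).2 hCfpos.le
        have hstep : |kerh K (h n) (x 0 - x₁) * BSpl μ (fun ω' => X ω' 1) H J (x 1)|
            ≤ ((BK / h n) * Set.indicator A (fun _ => (1:ℝ)) (x 0))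
              * (M * Set.indicator Bset (fun _ => (1:ℝ)) (x 1)) := by
          rw [abs_mul, abs_of_nonneg (hker_nonneg _)]
          refine mul_le_mul (hkerb (x 0)) (hBb (x 1)) (abs_nonneg _) ?_
          exact mul_nonneg (by positivity)
            (Set.indicator_nonneg (fun _ _ => zero_le_one) _)
        calc max (f x) 0 * |kerh K (h n) (x 0 - x₁) * BSpl μ (fun ω' => X ω' 1) H J (x 1)|
            ≤ Cf * (((BK / h n) * Set.indicator A (fun _ => (1:ℝ)) (x 0))
              * (M * Set.indicator Bset (fun _ => (1:ℝ)) (x 1))) := by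
              exact mul_le_mul hfx hstep (abs_nonneg _) hCfpos.le
          _ = D * Set.indicator S (fun _ => (1:ℝ)) x := by
              by_cases h0 : x 0 ∈ A <;> by_cases h1 : x 1 ∈ Bset
              · have hxS : x ∈ S := ⟨h0, h1⟩
                rw [Set.indicator_of_mem h0, Set.indicator_of_mem h1,
                  Set.indicator_of_mem hxS, hDdef]
                ring
              · have hxS : x ∉ S := fun hS => h1 hS.2
                rw [Set.indicator_of_mem h0, Set.indicator_of_notMem h1,
                  Set.indicator_of_notMem hxS]
                ring
              · have hxS : x ∉ S := fun hS => h0 hS.1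
                rw [Set.indicator_of_notMem h0, Set.indicator_of_mem h1,
                  Set.indicator_of_notMem hxS]
                ring
              · have hxS : x ∉ S := fun hS => h0 hS.1
                rw [Set.indicator_of_notMem h0, Set.indicator_of_notMem h1,
                  Set.indicator_of_notMem hxS]
                ring
    have step4 : ∫ x in Set.Icc (0 : Fin 2 → ℝ) 1, D * Set.indicator S (fun _ => (1:ℝ)) x
        ≤ D * (4 * h n * H) := by
      rw [integral_const_mul, integral_indicator_const (1:ℝ) hSmeas, measureReal_def, smul_eq_mul, mul_one]
      refine mul_le_mul_of_nonneg_left ?_ hDpos.le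
      refine ENNReal.toReal_le_of_le_ofReal (by positivity) ?_
      rw [Measure.restrict_apply hSmeas]
      exact le_trans (measure_mono Set.inter_subset_left) hSvol
    have hfinal : D * (4 * h n * H) = C₀ * Real.sqrt H := by
      have hsH : Real.sqrt H * Real.sqrt H = H := Real.mul_self_sqrt hHpos.le
      have hsqcf : (0:ℝ) < Real.sqrt cf := Real.sqrt_pos.2 hcf
      have hsqH : (0:ℝ) < Real.sqrt H := Real.sqrt_pos.2 hHpos
      rw [hDdef, hMdef, hC₀def, Real.sqrt_mul hcf.le]
      field_simp
      linear_combination (-1 : ℝ) * hsH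
    calc |∫ ω, kerh K (h n) (X ω 0 - x₁) * BSpl μ (fun ω' => X ω' 1) H J (X ω 1) ∂μ|
        ≤ ∫ ω, |kerh K (h n) (X ω 0 - x₁) * BSpl μ (fun ω' => X ω' 1) H J (X ω 1)| ∂μ := by
          simpa only [Real.norm_eq_abs] using
            norm_integral_le_integral_norm
              (fun ω => kerh K (h n) (X ω 0 - x₁) * BSpl μ (fun ω' => X ω' 1) H J (X ω 1)) (μ := μ)
      _ ≤ D * (4 * h n * H) := by rw [step2]; exact le_trans step3 step4
      _ = C₀ * Real.sqrt H := hfinal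
end
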